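/- Let G be a group, α : G × G → ℂˣ a normalized 2-cocycle, and g, h, k ∈ G with gh = hg and gk = kg. Then γ(α)(g, hk) = γ(α)(g,h) · γ(α)(g,k), where γ(α)(x,y) = α(x,y)·α(y,x)⁻¹. Consequently, the map h ↦ γ(α)(g,h) is a group homomorphism from the centralizer of g in G to ℂˣ. -/
import Mathlib

private lemma phase_key {G : Type*} [Group G] (α : G → G → ℂˣ)
    (hcoc : ∀ g h k : G, α g (h * k) * α h k = α g h * α (g * h) k)
    (g h k : G) (hgh : g * h = h * g) (hgk : g * k = k * g) :
    α g (h * k) * (α (h * k) g)⁻¹ = (α g h * (α h g)⁻¹) * (α g k * (α k g)⁻¹) := by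
  have e1 := hcoc g h k
  have e2 := hcoc h k g
  have e3 := hcoc h g k
  rw [← hgk] at e2
  rw [← hgh] at e3
  have e1' := congrArg (Units.val) e1
  have e2' := congrArg (Units.val) e2
  have e3' := congrArg (Units.val) e3
  push_cast at e1' e2' e3'
  ext
  push_cast
  field_simp
  apply mul_right_cancel₀ (b := (α h k : ℂ) * (α g k : ℂ))
    (mul_ne_zero (α h k).ne_zero (α g k).ne_zero)
  linear_combination ((α h g : ℂ) * (α k g : ℂ) * (α g k : ℂ)) * e1'
    + ((α g h : ℂ) * (α g k : ℂ) * (α g k : ℂ)) * e2'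
    - ((α g h : ℂ) * (α k g : ℂ) * (α g k : ℂ)) * e3'

theorem phase_multiplicative {G : Type*} [Group G] (α : G → G → ℂˣ)
    (hα1 : ∀ g : G, α g 1 = 1) (hα1' : ∀ g : G, α 1 g = 1)
    (hcoc : ∀ g h k : G, α g (h * k) * α h k = α g h * α (g * h) k)
    (g h k : G) (hgh : g * h = h * g) (hgk : g * k = k * g) :
    α g (h * k) * (α (h * k) g)⁻¹ = (α g h * (α h g)⁻¹) * (α g k * (α k g)⁻¹) ∧
    ∃ φ : Subgroup.centralizer ({g} : Set G) →* ℂˣ,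
      ∀ x : Subgroup.centralizer ({g} : Set G), φ x = α g (x : G) * (α (x : G) g)⁻¹ := by
  refine ⟨phase_key α hcoc g h k hgh hgk, ?_⟩
  refine ⟨MonoidHom.mk' (fun x => α g (x : G) * (α (x : G) g)⁻¹) ?_, fun x => rfl⟩
  intro a b
  have ha : g * (a : G) = (a : G) * g :=
    (Subgroup.mem_centralizer_iff.mp a.2) g rfl
  have hb : g * (b : G) = (b : G) * g :=
    (Subgroup.mem_centralizer_iff.mp b.2) g rfl
  exact phase_key α hcoc g a b ha hb
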